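/- Let w ∈ R^{n+1} with w_2 = ... = w_n = 0, w_1 ≠ 0, and w*w < 0, and set λ = w_0/w_1. Then |λ| < 1, and for any x ∈ L^n with half-space image h, one has w*x = 0 if and only if ‖h‖² = (1-λ)/(1+λ). That is, the decision hyperplane {x ∈ L^n : w*x = 0} maps onto the Euclidean sphere of radius √((1-λ)/(1+λ)) centered at the origin in the half-space model. -/
import Mathlib


/-- Minkowski bilinear form on ℝ^{n+1}. -/
def mink {n : ℕ} (u v : Fin (n+1) → ℝ) : ℝ :=
  u 0 * v 0 - ∑ i : Fin n, u i.succ * v i.succ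

theorem stmt5 (n : ℕ) (w : Fin (n+2) → ℝ)
    (hwzero : ∀ i : Fin (n+2), 2 ≤ (i : ℕ) → w i = 0)
    (hw1 : w 1 ≠ 0) (hww : mink w w < 0) (lam : ℝ) (hlam : lam = w 0 / w 1)
    (x : Fin (n+2) → ℝ)
    (hx : x 0 ^ 2 - ∑ i : Fin (n+1), x i.succ ^ 2 = 1) (hx0 : 0 < x 0)
    (b : Fin (n+1) → ℝ) (hb : ∀ i, b i = x i.succ / (1 + x 0))
    (h : Fin (n+1) → ℝ)
    (hh : ∀ i, h i = (if i = 0 then 1 - ∑ j, b j ^ 2 else 2 * b i) /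
        (1 + 2 * b 0 + ∑ j, b j ^ 2)) :
    |lam| < 1 ∧ (mink w x = 0 ↔ ∑ i, h i ^ 2 = (1 - lam) / (1 + lam)) := by
  have hw2 : ∀ i : Fin n, w i.succ.succ = 0 := by
    intro i
    apply hwzero
    simp [Fin.val_succ]
  have hmw : mink w w = w 0 ^ 2 - w 1 ^ 2 := by
    unfold mink
    rw [Fin.sum_univ_succ]
    simp [hw2, Fin.succ_zero_eq_one]
    ring
  have hmx : mink w x = w 0 * x 0 - w 1 * x 1 := by
    unfold mink
    rw [Fin.sum_univ_succ]
    simp [hw2, Fin.succ_zero_eq_one]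
  have hkey : lam * w 1 = w 0 := by
    rw [hlam]; field_simp
  have hw1sq : 0 < w 1 ^ 2 := by positivity
  rw [hmw] at hww
  have hw0sq : w 0 ^ 2 = lam ^ 2 * w 1 ^ 2 := by rw [← hkey]; ring
  have hlamsq : lam ^ 2 < 1 := by nlinarith
  have habs : |lam| < 1 := by
    rw [abs_lt]; constructor <;> nlinarith
  have hlam1 : 0 < 1 + lam := by
    rcases abs_lt.mp habs with ⟨h1, h2⟩; linarith
  -- sum of squares facts
  have hS2 : ∑ i : Fin (n+1), x i.succ ^ 2
      = x 1 ^ 2 + ∑ i : Fin n, x i.succ.succ ^ 2 := by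
    rw [Fin.sum_univ_succ, Fin.succ_zero_eq_one]
  have hrest : 0 ≤ ∑ i : Fin n, x i.succ.succ ^ 2 := by positivity
  have hpos : 0 < x 0 + x 1 := by nlinarith [sq_nonneg (x 0 + x 1)]
  have hpos2 : 0 < 1 + x 0 := by linarith
  have hbs : ∑ j, b j ^ 2 = (x 0 ^ 2 - 1) / (1 + x 0) ^ 2 := by
    simp only [hb, div_pow]
    rw [← Finset.sum_div]
    rw [show ∑ i : Fin (n+1), x i.succ ^ 2 = x 0 ^ 2 - 1 by linarith]
  have hb0 : b 0 = x 1 / (1 + x 0) := by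
    rw [hb, Fin.succ_zero_eq_one]
  have hD : 1 + 2 * b 0 + ∑ j, b j ^ 2 = 2 * (x 0 + x 1) / (1 + x 0) := by
    rw [hbs, hb0]
    field_simp
    ring
  have hh0 : h 0 = 1 / (x 0 + x 1) := by
    rw [hh, if_pos rfl, hD, hbs]
    field_simp
    ring
  have hhs : ∀ i : Fin n, h i.succ = x i.succ.succ / (x 0 + x 1) := by
    intro i
    rw [hh, if_neg (Fin.succ_ne_zero i), hD, hb]
    field_simp
  have hsum : ∑ i, h i ^ 2 = (x 0 - x 1) / (x 0 + x 1) := by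
    rw [Fin.sum_univ_succ, hh0]
    simp only [hhs, div_pow]
    rw [← Finset.sum_div]
    rw [show ∑ i : Fin n, x i.succ.succ ^ 2 = x 0 ^ 2 - 1 - x 1 ^ 2 by
      rw [hS2] at hx; linarith]
    field_simp
    ring
  refine ⟨habs, ?_⟩
  rw [hmx, hsum]
  constructor
  · intro h0eq
    have h2 : w 1 * (x 1 - lam * x 0) = 0 := by
      linear_combination -h0eq - x 0 * hkey
    have hx1eq : x 1 = lam * x 0 := by
      rcases mul_eq_zero.mp h2 with h3 | h3
      · exact absurd h3 hw1
      · linarith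
    rw [hx1eq]
    have hne : x 0 + lam * x 0 ≠ 0 := by nlinarith [mul_pos hx0 hlam1]
    field_simp
  · intro heq
    have hcross : (x 0 - x 1) * (1 + lam) = (1 - lam) * (x 0 + x 1) :=
      (div_eq_div_iff hpos.ne' hlam1.ne').mp heq
    have hx1eq : x 1 = lam * x 0 := by linear_combination -hcross / 2
    rw [hx1eq]
    linear_combination (-(x 0)) * hkey
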